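/- arXiv:2504.00153 — 5 statements merged into one kernel-verified Lean document; each statement's English description precedes it below -/
import Mathlib

section
/- Every unit interval graph (intersection graph of unit-length closed real intervals with non-integer endpoints) admits a 2-coloring of its vertices such that each color class induces a disjoint union of complete graphs. -/
/-!
Colour each vertex by the parity of `⌊ℓ v⌋`. Two intersecting unit intervals have left endpoints
at distance at most `1`, so their floors differ by at most `1`; if they also have the same parity,
the floors coincide. Hence within a colour class adjacency forces equal floors, which is an
equivalence relation, and two left endpoints with equal floors are less than `1` apart, so
their intervals meet.
-/

theorem Set.Icc_inter_Icc_add_nonempty_iff {α : Type*} [AddCommGroup α] [LinearOrder α]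
    [IsOrderedAddMonoid α] (a b d : α) :
    (Set.Icc a (a + d) ∩ Set.Icc b (b + d)).Nonempty ↔ |a - b| ≤ d := by
  rw [Set.Icc_inter_Icc, Set.nonempty_Icc, max_le_iff, le_min_iff, le_min_iff]
  refine ⟨fun ⟨⟨_, hab⟩, hba, _⟩ =>
    abs_sub_le_iff.2 ⟨sub_le_iff_le_add'.2 hab, sub_le_iff_le_add'.2 hba⟩, fun h => ?_⟩
  have hd : 0 ≤ d := (abs_nonneg _).trans h
  obtain ⟨hab, hba⟩ := abs_sub_le_iff.1 h
  exact ⟨⟨le_add_of_nonneg_right hd, sub_le_iff_le_add'.1 hab⟩, sub_le_iff_le_add'.1 hba,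
    le_add_of_nonneg_right hd⟩

theorem Int.floor_eq_floor_of_abs_sub_le_one_of_even_iff {R : Type*} [Ring R] [LinearOrder R]
    [FloorRing R] [IsOrderedRing R] {a b : R} (h : |a - b| ≤ 1) (hpar : Even ⌊a⌋ ↔ Even ⌊b⌋) :
    ⌊a⌋ = ⌊b⌋ := by
  obtain ⟨hab, hba⟩ := abs_sub_le_iff.1 h
  have hab' : ⌊a⌋ ≤ ⌊b⌋ + 1 := by
    simpa only [Int.floor_add_one] using Int.floor_le_floor (sub_le_iff_le_add'.1 hab)
  have hba' : ⌊b⌋ ≤ ⌊a⌋ + 1 := by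
    simpa only [Int.floor_add_one] using Int.floor_le_floor (sub_le_iff_le_add'.1 hba)
  rw [Int.even_iff, Int.even_iff] at hpar
  omega

theorem Fin.ite_zero_one_inj {p q : Prop} [Decidable p] [Decidable q]
    (h : (if p then (0 : Fin 2) else 1) = if q then 0 else 1) : p ↔ q := by
  split_ifs at h <;> simp_all

theorem unit_interval_two_coloring_general {V : Type*} (ℓ : V → ℝ)
    (G : SimpleGraph V)
    (hG : ∀ u v : V, G.Adj u v ↔ u ≠ v ∧
      (Set.Icc (ℓ u) (ℓ u + 1) ∩ Set.Icc (ℓ v) (ℓ v + 1)).Nonempty) :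
    ∃ c : V → Fin 2, ∀ u v w : V, c u = c v → c v = c w →
      G.Adj u v → G.Adj v w → u ≠ w → G.Adj u w := by
  simp only [Set.Icc_inter_Icc_add_nonempty_iff] at hG
  have floor_eq {u v : V} (huv : G.Adj u v)
      (hc : (if Even ⌊ℓ u⌋ then (0 : Fin 2) else 1) = if Even ⌊ℓ v⌋ then 0 else 1) :
      ⌊ℓ u⌋ = ⌊ℓ v⌋ :=
    Int.floor_eq_floor_of_abs_sub_le_one_of_even_iff ((hG u v).1 huv).2 (Fin.ite_zero_one_inj hc)
  refine ⟨fun v => if Even ⌊ℓ v⌋ then 0 else 1, fun u v w huv hvw hadj hadj' hne => ?_⟩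
  have huw : ⌊ℓ u⌋ = ⌊ℓ w⌋ := (floor_eq hadj huv).trans (floor_eq hadj' hvw)
  exact (hG u w).2 ⟨hne, (Int.abs_sub_lt_one_of_floor_eq_floor huw).le⟩

/-- Every unit interval graph (the intersection graph of closed unit-length real
intervals with non-integer endpoints) admits a `2`-coloring of its vertices in which each
color class induces a disjoint union of complete graphs. -/
theorem unit_interval_two_coloring {V : Type*} [Fintype V] (ℓ : V → ℝ)
    (hni : ∀ v : V, ∀ n : ℤ, ℓ v ≠ (n : ℝ) ∧ ℓ v + 1 ≠ (n : ℝ))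
    (G : SimpleGraph V)
    (hG : ∀ u v : V, G.Adj u v ↔ u ≠ v ∧
      (Set.Icc (ℓ u) (ℓ u + 1) ∩ Set.Icc (ℓ v) (ℓ v + 1)).Nonempty) :
    ∃ c : V → Fin 2, ∀ u v w : V, c u = c v → c v = c w →
      G.Adj u v → G.Adj v w → u ≠ w → G.Adj u w :=
  unit_interval_two_coloring_general ℓ G hG
end

section
/- Let C be a class of graphs. C is intersectionwise χ-imposing (that is, for every class B of graphs, the class of intersections {G ∩ H : G ∈ C, H ∈ B, V(G) = V(H)} is χ-bounded) if and only if there exists an integer k such that every graph in C has chromatic number at most k. -/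
open SimpleGraph

/-- A class of finite simple graphs, given by a predicate on graphs on `Fin n` for each `n`. -/
def GraphClass : Type :=
  ∀ n : ℕ, SimpleGraph (Fin n) → Prop

/-- A class is hereditary if it is closed under isomorphism and induced subgraphs,
i.e. closed under taking images of induced embeddings. -/
def GraphClass.Hereditary (C : GraphClass) : Prop :=
  ∀ (n m : ℕ) (G : SimpleGraph (Fin n)) (H : SimpleGraph (Fin m)), C n G →
    (∃ f : Fin m ↪ Fin n, ∀ u v : Fin m, H.Adj u v ↔ G.Adj (f u) (f v)) → C m H

/-- A class of graphs is χ-bounded if there is a nondecreasing function `f` with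
`χ(G) ≤ f(ω(G))` for every graph `G` in the class. -/
def GraphClass.ChiBounded (C : GraphClass) : Prop :=
  ∃ f : ℕ → ℕ, Monotone f ∧
    ∀ (n : ℕ) (G : SimpleGraph (Fin n)), C n G → G.chromaticNumber ≤ (f G.cliqueNum : ℕ∞)

/-- The graph-intersection of two classes: all graphs of the form `G ⊓ H` with `G` in the
first class and `H` in the second, on a common vertex set. -/
def GraphClass.inter (C B : GraphClass) : GraphClass :=
  fun n K => ∃ G H : SimpleGraph (Fin n), C n G ∧ B n H ∧ K = G ⊓ H


/-!
If every graph of `C` is `k`-colorable, so is every `G ⊓ H` with `G ∈ C`. Conversely, take for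
the second class all graphs, with χ-bounding function `f`. Since `G = G ⊓ G`, it suffices to
bound the clique number on `C`. If some `G ∈ C` had a clique on `N²` vertices with
`N > 2 ^ f 2`, intersecting `G` with a copy of the shift graph on `Fin N` placed on that clique
would give the shift graph itself: it is triangle-free, so `f 2` colours would suffice, yet it
needs more than `log₂ N` colours.
-/

namespace SimpleGraph

variable {V W : Type*} {G : SimpleGraph V}

theorem cliqueNum_lt_of_cliqueFree {n : ℕ} (h : G.CliqueFree n) : G.cliqueNum < n :=
  lt_of_not_ge fun hle => h.mono hle _ G.exists_isNClique_cliqueNum.choose_spec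

theorem not_cliqueFree_of_le_cliqueNum {n : ℕ} (h : n ≤ G.cliqueNum) : ¬G.CliqueFree n :=
  fun hfree => hfree.mono h _ G.exists_isNClique_cliqueNum.choose_spec

theorem map_le_of_top_embedding (e : (⊤ : SimpleGraph W) ↪g G) (H : SimpleGraph W) :
    H.map e.toEmbedding ≤ G :=
  (map_le_iff_le_comap _ _ _).2 fun _ _ huv => e.map_adj_iff.2 huv.ne

/-- The shift graph: `(a, b)` and `(b, c)` are adjacent whenever `a < b < c`; pairs that are
not increasing are isolated. -/
def shiftGraph (α : Type*) [LinearOrder α] : SimpleGraph (α × α) :=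
  fromRel fun p q => p.1 < p.2 ∧ p.2 = q.1 ∧ q.1 < q.2

variable {α : Type*} [LinearOrder α]

theorem shiftGraph_cliqueFree_three : (shiftGraph α).CliqueFree 3 := by
  intro s hs
  obtain ⟨a, b, c, hab, hac, hbc, rfl⟩ := is3Clique_iff.1 hs
  simp only [shiftGraph, fromRel_adj] at hab hac hbc
  obtain ⟨a1, a2⟩ := a
  obtain ⟨b1, b2⟩ := b
  obtain ⟨c1, c2⟩ := c
  rcases hab.2 with h1 | h1 <;> rcases hac.2 with h2 | h2 <;> rcases hbc.2 with h3 | h3 <;>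
    order

/-- The sets `out i = {C (i, j) | i < j}` are pairwise distinct: for `i < i'` the colour of
`(i, i')` lies in `out i` but not in `out i'`, as `(i, i')` is adjacent to every `(i', j)`. -/
theorem card_le_two_pow_of_coloring [Fintype α] {β : Type*} [Fintype β]
    (C : (shiftGraph α).Coloring β) : Fintype.card α ≤ 2 ^ Fintype.card β := by
  let out : α → Set β := fun i => (fun j => C (i, j)) '' Set.Ioi i
  have out_ne : ∀ {i i'}, i < i' → out i ≠ out i' := by
    intro i i' hlt hout
    obtain ⟨j, hj, hcol⟩ : C (i, i') ∈ out i' := hout ▸ ⟨i', hlt, rfl⟩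
    have hadj : (shiftGraph α).Adj (i, i') (i', j) :=
      (fromRel_adj _ _ _).2 ⟨fun h => hlt.ne congr($h.1), Or.inl ⟨hlt, rfl, hj⟩⟩
    exact C.valid hadj hcol.symm
  have out_injective : Function.Injective out := by
    intro i i' hout
    by_contra hne
    rcases Ne.lt_or_gt hne with hlt | hlt
    exacts [out_ne hlt hout, out_ne hlt hout.symm]
  simpa [Fintype.card_set] using Fintype.card_le_of_injective out out_injective

theorem shiftGraph_not_colorable [Fintype α] {c : ℕ} (h : 2 ^ c < Fintype.card α) :
    ¬(shiftGraph α).Colorable c :=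
  fun ⟨C⟩ => (card_le_two_pow_of_coloring C).not_gt (by rwa [Fintype.card_fin])

end SimpleGraph

namespace GraphClass

def all : GraphClass := fun _ _ => True

variable {C : GraphClass}

theorem inter_all_of_le {n : ℕ} {G H : SimpleGraph (Fin n)} (hG : C n G) (hHG : H ≤ G) :
    C.inter all n H :=
  ⟨G, H, hG, trivial, (inf_eq_right.2 hHG).symm⟩

theorem cliqueNum_lt_of_chiBounded_inter_all {f : ℕ → ℕ} (hf : Monotone f)
    (hb : ∀ (n : ℕ) (G : SimpleGraph (Fin n)), C.inter all n G →
      G.chromaticNumber ≤ (f G.cliqueNum : ℕ∞))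
    {n : ℕ} {G : SimpleGraph (Fin n)} (hG : C n G) :
    G.cliqueNum < (2 ^ f 2 + 1) * (2 ^ f 2 + 1) := by
  by_contra! hle
  let e : (⊤ : SimpleGraph (Fin (2 ^ f 2 + 1) × Fin (2 ^ f 2 + 1))) ↪g G :=
    (topEmbeddingOfNotCliqueFree (not_cliqueFree_of_le_cliqueNum hle)).comp
      (Iso.completeGraph finProdFinEquiv).toEmbedding
  let S := (shiftGraph (Fin (2 ^ f 2 + 1))).map e.toEmbedding
  have hS : S.cliqueNum ≤ 2 :=
    Nat.lt_succ_iff.1 <| cliqueNum_lt_of_cliqueFree <|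
      cliqueFree_map_iff.2 shiftGraph_cliqueFree_three
  have hScol : S.Colorable (f 2) := chromaticNumber_le_iff_colorable.1 <|
    (hb n S (inter_all_of_le hG (map_le_of_top_embedding e _))).trans (by exact_mod_cast hf hS)
  exact shiftGraph_not_colorable (by simp) (hScol.of_hom (Embedding.map _ _).toHom)

theorem exists_chromaticNumber_le_of_chiBounded_inter_all (h : (C.inter all).ChiBounded) :
    ∃ k : ℕ, ∀ (n : ℕ) (G : SimpleGraph (Fin n)), C n G → G.chromaticNumber ≤ (k : ℕ∞) := by
  obtain ⟨f, hf, hb⟩ := h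
  refine ⟨f ((2 ^ f 2 + 1) * (2 ^ f 2 + 1)), fun n G hG => ?_⟩
  calc G.chromaticNumber ≤ f G.cliqueNum := hb n G (inter_all_of_le hG le_rfl)
    _ ≤ f ((2 ^ f 2 + 1) * (2 ^ f 2 + 1)) := by
      exact_mod_cast hf (cliqueNum_lt_of_chiBounded_inter_all hf hb hG).le

theorem chiBounded_inter_of_chromaticNumber_le {k : ℕ}
    (hk : ∀ (n : ℕ) (G : SimpleGraph (Fin n)), C n G → G.chromaticNumber ≤ (k : ℕ∞))
    (B : GraphClass) : (C.inter B).ChiBounded := by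
  refine ⟨fun _ => k, monotone_const, ?_⟩
  rintro n _ ⟨G, H, hG, -, rfl⟩
  exact (chromaticNumber_mono _ inf_le_left).trans (hk n G hG)

end GraphClass

theorem chi_imposing_iff_colorable_general (C : GraphClass) :
    (∀ B : GraphClass, (C.inter B).ChiBounded) ↔
      ∃ k : ℕ, ∀ (n : ℕ) (G : SimpleGraph (Fin n)), C n G → G.chromaticNumber ≤ (k : ℕ∞) :=
  ⟨fun h => GraphClass.exists_chromaticNumber_le_of_chiBounded_inter_all (h .all),
    fun ⟨_, hk⟩ => GraphClass.chiBounded_inter_of_chromaticNumber_le hk⟩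

/-- A hereditary class `C` is intersectionwise χ-imposing (its graph-intersection with
every class of graphs is χ-bounded) iff `C` is colorable, i.e. there is a uniform bound
on the chromatic numbers of its members. -/
theorem chi_imposing_iff_colorable (C : GraphClass) (hC : C.Hereditary) :
    (∀ B : GraphClass, (C.inter B).ChiBounded) ↔
      ∃ k : ℕ, ∀ (n : ℕ) (G : SimpleGraph (Fin n)), C n G → G.chromaticNumber ≤ (k : ℕ∞) :=
  chi_imposing_iff_colorable_general C
end

section
/- Let D be a finite digraph and let L⃗(D) be its line digraph. Then the chromatic number of the underlying undirected graph of L⃗(D) is at least log₂ of the chromatic number of the underlying undirected graph of D. Equivalently, if the underlying graph of L⃗(D) has a proper coloring with c colors, then the underlying graph of D has a proper coloring with 2^c colors. -/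
/-- Harner–Entringer: if the underlying undirected graph of the line digraph of a finite
digraph `D` (with arc relation `A`) has a proper coloring with `c` colors, then the
underlying undirected graph of `D` has a proper coloring with `2 ^ c` colors; that is,
`χ(L⃗(D)) ≥ log₂ (χ(D))`. -/
theorem line_digraph_coloring {V : Type*} [Fintype V] (A : V → V → Prop) (c : ℕ)
    (φ : {e : V × V // A e.1 e.2} → Fin c)
    (hφ : ∀ e f : {e : V × V // A e.1 e.2}, e ≠ f →
      (e.val.2 = f.val.1 ∨ f.val.2 = e.val.1) → φ e ≠ φ f) :
    ∃ ψ : V → Fin (2 ^ c), ∀ u v : V, u ≠ v → (A u v ∨ A v u) → ψ u ≠ ψ v := by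
  classical
  let S : V → (Fin c → Bool) := fun v i =>
    decide (∃ e : {e : V × V // A e.1 e.2}, e.val.2 = v ∧ φ e = i)
  have hcard : Fintype.card (Fin c → Bool) = 2 ^ c := by simp
  let E := Fintype.equivFinOfCardEq hcard
  have key : ∀ a b : V, a ≠ b → A a b → S a ≠ S b := by
    intro a b hab hA hS
    set e : {e : V × V // A e.1 e.2} := ⟨(a, b), hA⟩ with he
    have hb : S b (φ e) = true := by
      simp only [S, decide_eq_true_eq]
      exact ⟨e, rfl, rfl⟩
    have ha : S a (φ e) = true := by rw [hS]; exact hb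
    simp only [S, decide_eq_true_eq] at ha
    obtain ⟨f, hf2, hfφ⟩ := ha
    have hfe : f ≠ e := by
      intro h
      rw [h] at hf2
      exact hab hf2.symm
    exact hφ f e hfe (Or.inl hf2) hfφ
  refine ⟨fun v => E (S v), ?_⟩
  intro u v huv hadj h
  have hS : S u = S v := E.injective h
  rcases hadj with hA | hA
  · exact key u v huv hA hS
  · exact key v u huv.symm hA hS.symm
end

section
/- Let G be a graph derived from a Burling tree in which two vertices u and v lie on a common root-to-leaf path of the tree (u is an ancestor of v). Then in the graph C(T), obtained from the fully derived graph G(T) by making the vertex set of every principal branch a clique, the closed neighborhoods satisfy N[v] ⊆ N[u]. -/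
/-- A Burling tree: a finite rooted tree (encoded by a parent function) together with a
last-born function `lastBorn` choosing a child of every non-leaf, and a choose function
`choose` associating to every non-last-born non-root vertex `v` the vertex set of a
(possibly empty) branch (descending path) starting at the last-born of the parent of
`v`, and `∅` to the root and to last-born vertices. -/
structure BurlingTree (V : Type*) where
  root : V
  parent : V → V
  parent_root : parent root = root
  parent_eq_self : ∀ v : V, parent v = v → v = root
  reaches_root : ∀ v : V, ∃ m : ℕ, parent^[m] v = root
  lastBorn : V → V
  lastBorn_spec : ∀ x : V, (∃ u : V, u ≠ x ∧ parent u = x) →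
    lastBorn x ≠ x ∧ parent (lastBorn x) = x
  choose : V → Set V
  choose_empty : ∀ v : V, (v = root ∨ v = lastBorn (parent v)) → choose v = ∅
  choose_branch : ∀ v : V, v ≠ root → v ≠ lastBorn (parent v) →
    ∃ L : List V, (L = [] ∨ L.head? = some (lastBorn (parent v))) ∧
      List.Chain' (fun a b => parent b = a) L ∧ choose v = {w | w ∈ L}

namespace BurlingTree

variable {V : Type*} (T : BurlingTree V)

/-- `u` is an ancestor of `v`: `u` lies on the path from `v` to the root. -/
def Ancestor (u v : V) : Prop := ∃ m : ℕ, T.parent^[m] v = u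

/-- Adjacency in `C(T)`, the graph obtained from the fully derived graph `G(T)` of a
Burling tree by making the vertex set of every principal branch (root-to-leaf path) a
clique: distinct `u, v` are adjacent iff one is chosen by the other or one is an
ancestor of the other. -/
def CAdj (u v : V) : Prop :=
  u ≠ v ∧ (v ∈ T.choose u ∨ u ∈ T.choose v ∨ T.Ancestor u v ∨ T.Ancestor v u)

end BurlingTree

/-!
Every neighbour `w` of `v` in `C(T)` is comparable with `v` in the tree or joined to it by a
chosen branch. Comparable vertices are handled by transitivity of the ancestor relation and
by the fact that the ancestors of `v` form a chain. If `w ∈ choose v`, then `w` lies below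
`parent v`, hence below `u`. If `v ∈ choose w`, the branch chosen by `w` runs from the
last-born child of `parent w` down to `v`: either `u` lies on it, or `u` is above `parent w`.
-/

lemma exists_iterate_eq_head_of_chain {α : Type*} (p : α → α) :
    ∀ (L : List α), L.IsChain (fun a b => p b = a) → ∀ a, L.head? = some a →
      ∀ x ∈ L, ∃ j, p^[j] x = a ∧ ∀ i ≤ j, p^[i] x ∈ L
  | [], _, _, hhead, _, _ => by simp at hhead
  | [b], _, a, hhead, x, hx => by
    obtain rfl : b = a := by simpa using hhead
    obtain rfl : x = b := by simpa using hx
    exact ⟨0, rfl, fun i hi => by simp [Nat.le_zero.mp hi]⟩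
  | b :: c :: t, hchain, a, hhead, x, hx => by
    obtain rfl : b = a := by simpa using hhead
    obtain ⟨hcb, htail⟩ := List.isChain_cons_cons.mp hchain
    rcases List.mem_cons.mp hx with rfl | hx
    · exact ⟨0, rfl, fun i hi => by simp [Nat.le_zero.mp hi]⟩
    obtain ⟨j, hj, hmem⟩ := exists_iterate_eq_head_of_chain p (c :: t) htail c rfl x hx
    have hstep : p^[j + 1] x = b := by rw [Function.iterate_succ_apply', hj, hcb]
    refine ⟨j + 1, hstep, fun i hi => ?_⟩
    rcases Nat.lt_or_eq_of_le hi with hlt | rfl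
    · exact List.mem_cons_of_mem _ (hmem i (Nat.lt_succ_iff.mp hlt))
    · rw [hstep]
      exact List.mem_cons_self

namespace BurlingTree

variable {V : Type*} {T : BurlingTree V}

theorem Ancestor.trans {u v w : V} (huv : T.Ancestor u v)
    (hvw : T.Ancestor v w) : T.Ancestor u w := by
  obtain ⟨m, rfl⟩ := huv
  obtain ⟨k, rfl⟩ := hvw
  exact ⟨m + k, Function.iterate_add_apply _ _ _ _⟩

theorem Ancestor.ancestor_parent_of_ne {u v : V} (h : T.Ancestor u v)
    (hne : u ≠ v) : T.Ancestor u (T.parent v) := by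
  obtain ⟨m, rfl⟩ := h
  obtain ⟨k, rfl⟩ := Nat.exists_eq_succ_of_ne_zero (fun h0 : m = 0 => hne (by simp [h0]))
  exact ⟨k, (Function.iterate_succ_apply _ _ _).symm⟩

variable (T)

theorem ancestor_or_ancestor_of_ancestor {u w v : V} (hu : T.Ancestor u v)
    (hw : T.Ancestor w v) : T.Ancestor u w ∨ T.Ancestor w u := by
  obtain ⟨m, rfl⟩ := hu
  obtain ⟨k, rfl⟩ := hw
  rcases le_total k m with hkm | hmk
  · exact Or.inl ⟨m - k, by rw [← Function.iterate_add_apply, Nat.sub_add_cancel hkm]⟩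
  · exact Or.inr ⟨k - m, by rw [← Function.iterate_add_apply, Nat.sub_add_cancel hmk]⟩

theorem parent_lastBorn_parent {v : V} (hv : v ≠ T.root) :
    T.parent (T.lastBorn (T.parent v)) = T.parent v :=
  (T.lastBorn_spec _ ⟨v, fun h => hv (T.parent_eq_self v h.symm), rfl⟩).2

theorem exists_iterate_of_mem_choose {v x : V} (hx : x ∈ T.choose v) :
    v ≠ T.root ∧ ∃ j, T.parent^[j] x = T.lastBorn (T.parent v) ∧
      ∀ i ≤ j, T.parent^[i] x ∈ T.choose v := by
  have hv : v ≠ T.root ∧ v ≠ T.lastBorn (T.parent v) :=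
    not_or.mp fun h => by simp [T.choose_empty v h] at hx
  obtain ⟨L, hhead, hchain, hL⟩ := T.choose_branch v hv.1 hv.2
  rw [hL] at hx ⊢
  have hhead : L.head? = some (T.lastBorn (T.parent v)) :=
    hhead.resolve_left (by rintro rfl; simp at hx)
  exact ⟨hv.1, exists_iterate_eq_head_of_chain T.parent L hchain _ hhead x hx⟩

theorem ancestor_of_mem_choose {v w : V} (hw : w ∈ T.choose v) :
    T.Ancestor (T.parent v) w := by
  obtain ⟨hv, j, hj, -⟩ := T.exists_iterate_of_mem_choose hw
  exact ⟨j + 1, by rw [Function.iterate_succ_apply', hj, T.parent_lastBorn_parent hv]⟩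

theorem mem_choose_or_ancestor_of_mem_choose {u v w : V} (hv : v ∈ T.choose w)
    (hu : T.Ancestor u v) : u ∈ T.choose w ∨ T.Ancestor u w := by
  obtain ⟨hw, j, hj, hmem⟩ := T.exists_iterate_of_mem_choose hv
  obtain ⟨m, rfl⟩ := hu
  rcases le_or_gt m j with hmj | hjm
  · exact Or.inl (hmem m hmj)
  · refine Or.inr ⟨m - (j + 1) + 1, ?_⟩
    rw [Function.iterate_succ_apply, ← T.parent_lastBorn_parent hw, ← hj,
      ← Function.iterate_succ_apply' T.parent j, ← Function.iterate_add_apply,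
      Nat.sub_add_cancel hjm]

end BurlingTree

/-- If `u` is an ancestor of `v` in a Burling tree `T` (so `u` and `v` lie on a common
root-to-leaf path), then in the graph `C(T)` the closed neighborhoods satisfy
`N[v] ⊆ N[u]`. -/
theorem burling_closed_nbhd_subset {V : Type*} (T : BurlingTree V) (u v : V)
    (h : T.Ancestor u v) :
    ∀ w : V, (w = v ∨ T.CAdj v w) → (w = u ∨ T.CAdj u w) := by
  intro w hw
  rcases eq_or_ne u v with rfl | huv
  · exact hw
  rcases eq_or_ne w u with hwu | hwu
  · exact Or.inl hwu
  refine Or.inr ⟨hwu.symm, ?_⟩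
  rcases hw with rfl | ⟨-, hwv | hvw | hvw | hwv⟩
  · exact Or.inr (Or.inr (Or.inl h))
  · exact Or.inr (Or.inr (Or.inl
      ((h.ancestor_parent_of_ne huv).trans (T.ancestor_of_mem_choose hwv))))
  · rcases T.mem_choose_or_ancestor_of_mem_choose hvw h with hu | hu
    · exact Or.inr (Or.inl hu)
    · exact Or.inr (Or.inr (Or.inl hu))
  · exact Or.inr (Or.inr (Or.inl (h.trans hvw)))
  · exact Or.inr (Or.inr (T.ancestor_or_ancestor_of_ancestor h hwv))
end

section
/- Let G be a finite simple graph such that every connected induced subgraph of G has a universal vertex (a vertex adjacent to all others in that subgraph). Then G is perfect; in fact χ(H) = ω(H) for every induced subgraph H of G. -/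
/-!
Induct on the vertex set, showing that `ω` colours suffice. If the induced graph is connected,
it is a universal vertex `v` joined to the rest: colour the rest with `ω(G - v)` colours and give
`v` a fresh one; every maximum clique of `G - v` extends by `v`, so `ω(G - v) + 1 ≤ ω(G)`. If it is
disconnected, it splits into two smaller parts with no edges between them, which can reuse the
same colours, and `ω` is monotone.
-/

open Finset

namespace SimpleGraph

variable {V W : Type*} {G : SimpleGraph V}

def IsUniversalVertex (H : SimpleGraph W) (v : W) : Prop :=
  ∀ w, w ≠ v → H.Adj v w

theorem exists_isClique_card_eq_cliqueNum_induce (S : Set V) :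
    ∃ K : Finset V, G.IsClique K ∧ ↑K ⊆ S ∧ #K = (G.induce S).cliqueNum := by
  obtain ⟨t, ht⟩ := (G.induce S).exists_isNClique_cliqueNum
  rw [isNClique_induce_iff] at ht
  exact ⟨t.map (.subtype _), ht.isClique, by simp, ht.card_eq⟩

theorem IsClique.card_le_cliqueNum_induce [Finite V] {S : Set V} {K : Finset V}
    (hK : G.IsClique K) (hKS : ↑K ⊆ S) : #K ≤ (G.induce S).cliqueNum := by
  classical
  have hmap : (K.subtype (· ∈ S)).map (.subtype _) = K := by
    rw [Finset.subtype_map, Finset.filter_true_of_mem fun x hx => hKS hx]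
  have hclique : (G.induce S).IsNClique #K (K.subtype (· ∈ S)) := by
    rw [isNClique_induce_iff, hmap]
    exact ⟨hK, rfl⟩
  exact hclique.card_eq ▸ hclique.isClique.card_le_cliqueNum

theorem cliqueNum_induce_mono [Finite V] {S T : Set V} (hST : S ⊆ T) :
    (G.induce S).cliqueNum ≤ (G.induce T).cliqueNum := by
  obtain ⟨K, hK, hKS, hcard⟩ := G.exists_isClique_card_eq_cliqueNum_induce S
  exact hcard ▸ hK.card_le_cliqueNum_induce (hKS.trans hST)

theorem cliqueNum_induce_add_one_le_insert [Finite V] {S : Set V} {v : V}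
    (hv : ∀ w ∈ S, G.Adj v w) :
    (G.induce S).cliqueNum + 1 ≤ (G.induce (insert v S)).cliqueNum := by
  classical
  obtain ⟨K, hK, hKS, hcard⟩ := G.exists_isClique_card_eq_cliqueNum_induce S
  have hvK : v ∉ K := fun hvK => G.irrefl (hv v (hKS hvK))
  have hclique : G.IsClique (insert v K : Finset V) := by
    rw [Finset.coe_insert]
    exact hK.insert fun w hw _ => hv w (hKS hw)
  have := hclique.card_le_cliqueNum_induce (S := insert v S)
    (by rw [Finset.coe_insert]; exact Set.insert_subset_insert hKS)
  rwa [Finset.card_insert_of_notMem hvK, hcard] at this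

theorem Colorable.induce_insert {S : Set V} {n : ℕ} (v : V) (h : (G.induce S).Colorable n) :
    (G.induce (insert v S)).Colorable (n + 1) := by
  classical
  obtain ⟨C⟩ := h
  refine ⟨Coloring.mk
    (fun w => if hw : ↑w ∈ S then (C ⟨w, hw⟩).castSucc else Fin.last n) ?_⟩
  rintro ⟨a, ha⟩ ⟨b, hb⟩ hab
  by_cases haS : a ∈ S <;> by_cases hbS : b ∈ S <;> simp only [haS, hbS, dif_pos]
  · exact fun heq =>
      C.valid (show (G.induce S).Adj ⟨a, haS⟩ ⟨b, hbS⟩ from hab) (Fin.castSucc_injective _ heq)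
  · exact (Fin.castSucc_lt_last _).ne
  · exact (Fin.castSucc_lt_last _).ne'
  · have hav : a = v := (Set.mem_insert_iff.1 ha).resolve_right haS
    have hbv : b = v := (Set.mem_insert_iff.1 hb).resolve_right hbS
    exact absurd hab (by simp [hav, hbv])

theorem Colorable.induce_union {A B : Set V} {n : ℕ} (hAB : ∀ a ∈ A, ∀ b ∈ B, ¬G.Adj a b)
    (hA : (G.induce A).Colorable n) (hB : (G.induce B).Colorable n) :
    (G.induce (A ∪ B)).Colorable n := by
  classical
  obtain ⟨CA⟩ := hA
  obtain ⟨CB⟩ := hB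
  refine ⟨Coloring.mk (fun w => if hw : ↑w ∈ A then CA ⟨w, hw⟩
    else CB ⟨w, (Set.mem_union _ _ _ |>.1 w.2).resolve_left hw⟩) ?_⟩
  rintro ⟨a, ha⟩ ⟨b, hb⟩ hab
  by_cases haA : a ∈ A <;> by_cases hbA : b ∈ A <;> simp only [haA, hbA, dif_pos]
  · exact CA.valid (show (G.induce A).Adj ⟨a, haA⟩ ⟨b, hbA⟩ from hab)
  · exact absurd hab (hAB a haA b ((Set.mem_union _ _ _).1 hb |>.resolve_left hbA))
  · exact absurd hab.symm (hAB b hbA a ((Set.mem_union _ _ _).1 ha |>.resolve_left haA))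
  · exact CB.valid (show (G.induce B).Adj ⟨a, _⟩ ⟨b, _⟩ from hab)

theorem exists_ssubset_union_eq_of_not_connected_induce {S : Set V} (hS : S.Nonempty)
    (hconn : ¬(G.induce S).Connected) :
    ∃ A B, A ⊂ S ∧ B ⊂ S ∧ A ∪ B = S ∧ ∀ a ∈ A, ∀ b ∈ B, ¬G.Adj a b := by
  have : Nonempty S := hS.to_subtype
  obtain ⟨u, w, huw⟩ : ∃ u w : S, ¬(G.induce S).Reachable u w := by
    simpa [connected_iff, Preconnected] using hconn
  set A := Subtype.val '' {y | (G.induce S).Reachable u y}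
  have hAS : A ⊆ S := Subtype.coe_image_subset _ _
  have huA : ↑u ∈ A := ⟨u, Reachable.refl _, rfl⟩
  have hwA : ↑w ∉ A := by
    rintro ⟨y, hy, hyw⟩
    exact huw (Subtype.ext hyw ▸ hy)
  refine ⟨A, S \ A, ⟨hAS, fun h => hwA (h w.2)⟩, ⟨Set.sdiff_subset, fun h => (h u.2).2 huA⟩,
    Set.union_sdiff_cancel hAS, ?_⟩
  rintro _ ⟨a, ha, rfl⟩ b ⟨hbS, hbA⟩ hab
  exact hbA ⟨⟨b, hbS⟩, ha.trans (Adj.reachable (G := G.induce S) hab), rfl⟩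

theorem colorable_induce_cliqueNum [Finite V]
    (h : ∀ S : Set V, (G.induce S).Connected → ∃ v, (G.induce S).IsUniversalVertex v)
    (S : Set V) : (G.induce S).Colorable (G.induce S).cliqueNum := by
  induction S using WellFoundedLT.induction with
  | _ S ih =>
  rcases S.eq_empty_or_nonempty with rfl | hne
  · exact Colorable.of_isEmpty _
  by_cases hconn : (G.induce S).Connected
  · obtain ⟨⟨v, hvS⟩, hv⟩ := h S hconn
    have hadj : ∀ w ∈ S \ {v}, G.Adj v w := fun w hw =>
      hv ⟨w, hw.1⟩ fun hwv => hw.2 (congrArg Subtype.val hwv)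
    rw [← Set.insert_sdiff_self_of_mem hvS]
    exact ((ih _ (Set.sdiff_singleton_ssubset.2 hvS)).induce_insert v).mono
      (cliqueNum_induce_add_one_le_insert hadj)
  · obtain ⟨A, B, hA, hB, rfl, hAB⟩ := exists_ssubset_union_eq_of_not_connected_induce hne hconn
    exact (((ih A hA).mono (le_max_left _ _)).induce_union hAB
      ((ih B hB).mono (le_max_right _ _))).mono
      (max_le (cliqueNum_induce_mono hA.subset) (cliqueNum_induce_mono hB.subset))

end SimpleGraph

open SimpleGraph

theorem perfect_of_universal_vertices_general {V : Type*} [Fintype V]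
    (G : SimpleGraph V)
    (h : ∀ s : Finset V, (G.induce (s : Set V)).Connected →
      ∃ v : (s : Set V), ∀ w : (s : Set V), w ≠ v → (G.induce (s : Set V)).Adj v w) :
    ∀ s : Finset V,
      (G.induce (s : Set V)).chromaticNumber = ((G.induce (s : Set V)).cliqueNum : ℕ∞) := by
  have hset : ∀ S : Set V, (G.induce S).Connected → ∃ v, (G.induce S).IsUniversalVertex v := by
    intro S hS
    obtain ⟨s, rfl⟩ := S.toFinite.exists_finset_coe
    exact h s hS
  intro s
  exact le_antisymm (colorable_induce_cliqueNum hset _).chromaticNumber_le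
    cliqueNum_le_chromaticNumber

/-- If every connected induced subgraph of a finite simple graph `G` has a universal
vertex, then `G` is perfect: `χ(H) = ω(H)` for every induced subgraph `H` of `G`. -/
theorem perfect_of_universal_vertices {V : Type*} [Fintype V] [DecidableEq V]
    (G : SimpleGraph V)
    (h : ∀ s : Finset V, (G.induce (s : Set V)).Connected →
      ∃ v : (s : Set V), ∀ w : (s : Set V), w ≠ v → (G.induce (s : Set V)).Adj v w) :
    ∀ s : Finset V,
      (G.induce (s : Set V)).chromaticNumber = ((G.induce (s : Set V)).cliqueNum : ℕ∞) :=
  perfect_of_universal_vertices_general G h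
end
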